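/- arXiv:2304.04506 — 10 statements merged into one kernel-verified Lean document; each statement's English description precedes it below -/
import Mathlib

section
/- Under the hypotheses Nm > α, F > 0, L = N[m(L+L_g)q + mg + F], and (L+L_g)q + g > 0, the equilibrium price exceeds marginal cost: p − mw = αmw((L+L_g)q+g)/(L+L_g − α((L+L_g)q+g)) > 0, where p = mw(L+L_g)/(L+L_g − α((L+L_g)q+g)). -/
/-- The equilibrium price exceeds marginal cost. -/
theorem stmt_5 (α N m w F g L Lg q : ℝ) (hα : 0 < α) (hN : 0 < N) (hm : 0 < m)
    (hw : 0 < w) (hF : 0 < F) (hg : 0 ≤ g) (hLg : 0 ≤ Lg) (hq : 0 ≤ q) (hL : 0 ≤ L)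
    (hNm : N * m > α)
    (hemp : L = N * (m * (L + Lg) * q + m * g + F))
    (hpos : 0 < (L + Lg) * q + g) :
    m * w * (L + Lg) / (L + Lg - α * ((L + Lg) * q + g)) - m * w =
      α * m * w * ((L + Lg) * q + g) / (L + Lg - α * ((L + Lg) * q + g)) ∧
    0 < m * w * (L + Lg) / (L + Lg - α * ((L + Lg) * q + g)) - m * w := by
  have hden : 0 < L + Lg - α * ((L + Lg) * q + g) := by
    have h1 : α * ((L + Lg) * q + g) < N * m * ((L + Lg) * q + g) :=
      (mul_lt_mul_of_pos_right hNm hpos)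
    nlinarith [mul_pos hN hF]
  constructor
  · field_simp
    ring
  · rw [sub_pos, lt_div_iff₀ hden]
    nlinarith [mul_pos (mul_pos hm hw) (mul_pos hα hpos)]
end

section
/- Assume Nm > α. If F ≤ α((L+L_g)q+g)L / ((L+L_g)N), then the symmetric-equilibrium profit Π = ((L+L_g)q+g)(p−mw) − Fw is nonnegative, where p = mw(L+L_g)/(L+L_g − α((L+L_g)q+g)) and L = N[m(L+L_g)q + mg + F]. -/
/-- A small fixed input guarantees nonnegative profit. -/
theorem stmt_8 (α N m w F g L Lg q : ℝ) (hα : 0 < α) (hN : 0 < N) (hm : 0 < m)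
    (hw : 0 < w) (hF : 0 ≤ F) (hg : 0 ≤ g) (hLg : 0 ≤ Lg) (hq : 0 ≤ q) (hL : 0 < L)
    (hNm : N * m > α)
    (hemp : L = N * (m * (L + Lg) * q + m * g + F))
    (hpos : 0 < (L + Lg) * q + g)
    (hFle : F ≤ α * ((L + Lg) * q + g) * L / ((L + Lg) * N)) :
    0 ≤ ((L + Lg) * q + g) *
        (m * w * (L + Lg) / (L + Lg - α * ((L + Lg) * q + g)) - m * w) - F * w := by
  set Q := (L + Lg) * q + g with hQdef
  have hS : 0 < L + Lg := by linarith
  have hden : 0 < L + Lg - α * Q := by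
    nlinarith [mul_pos (sub_pos.2 hNm) hpos, mul_nonneg hN.le hF]
  have hFle' : F * ((L + Lg) * N) ≤ α * Q * L := by
    have := (le_div_iff₀ (mul_pos hS hN)).mp hFle
    linarith
  have hemp' : L = N * (m * Q + F) := by rw [hQdef]; linear_combination hemp
  have hemp2 : α * Q * L = N * m * α * Q ^ 2 + N * α * Q * F := by
    linear_combination (α * Q) * hemp'
  have hkey : F * (L + Lg - α * Q) ≤ m * α * Q ^ 2 := by
    have hN' : N * (F * (L + Lg - α * Q)) ≤ N * (m * α * Q ^ 2) := by nlinarith [hFle', hemp2]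
    exact le_of_mul_le_mul_left hN' hN
  have h1 : m * w * (L + Lg) / (L + Lg - α * Q) - m * w
      = m * w * (α * Q) / (L + Lg - α * Q) := by
    field_simp
    ring
  rw [h1]
  have h2 : Q * (m * w * (α * Q) / (L + Lg - α * Q))
      = Q * (m * w * (α * Q)) / (L + Lg - α * Q) := by ring
  rw [h2, sub_nonneg, le_div_iff₀ hden]
  nlinarith [hkey, hw]
end

section
/- Let L(τ) = N[(1−τ)(mL_g+αF) + (mg+F)mN]/(α+(Nm−α)τ) with Nm > α, g ≥ 0, F > 0, L_g ≥ 0. Then for τ ∈ (0,1), dL/dτ = −N²m²(L_g + (Nm−α)g + NF)/(α+(Nm−α)τ)² < 0: a tax increase decreases private employment. -/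
theorem hasDerivAt_affine_div_affine {𝕜 : Type*} [NontriviallyNormedField 𝕜] (a b c d x : 𝕜)
    (hx : c + d * x ≠ 0) :
    HasDerivAt (fun x => (a + b * x) / (c + d * x)) ((b * c - a * d) / (c + d * x) ^ 2) x := by
  have hnum : HasDerivAt (fun x => a + b * x) b x :=
    (((hasDerivAt_id x).const_mul b).const_add a).congr_deriv (mul_one b)
  have hden : HasDerivAt (fun x => c + d * x) d x :=
    (((hasDerivAt_id x).const_mul d).const_add c).congr_deriv (mul_one d)
  exact (hnum.div hden hx).congr_deriv (by ring)

theorem stmt_10_general (α N m F g Lg : ℝ) (hα : 0 < α) (hN : 0 < N) (hm : 0 < m)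
    (hF : 0 < F) (hg : 0 ≤ g) (hLg : 0 ≤ Lg) (hNm : N * m > α)
    (τ : ℝ) (hτ0 : 0 < τ) :
    deriv (fun τ : ℝ =>
        N * ((1 - τ) * (m * Lg + α * F) + (m * g + F) * m * N) / (α + (N * m - α) * τ)) τ
      = -(N ^ 2 * m ^ 2 * (Lg + (N * m - α) * g + N * F)) / (α + (N * m - α) * τ) ^ 2 ∧
    deriv (fun τ : ℝ =>
        N * ((1 - τ) * (m * Lg + α * F) + (m * g + F) * m * N) / (α + (N * m - α) * τ)) τ < 0 := by
  have hgap : 0 < N * m - α := sub_pos.2 hNm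
  have hden : 0 < α + (N * m - α) * τ := by positivity
  have haffine : (fun τ : ℝ =>
        N * ((1 - τ) * (m * Lg + α * F) + (m * g + F) * m * N) / (α + (N * m - α) * τ)) =
      fun τ => (N * (m * Lg + α * F + (m * g + F) * m * N) + -(N * (m * Lg + α * F)) * τ) /
        (α + (N * m - α) * τ) := by
    funext τ; ring
  have hderiv : deriv (fun τ : ℝ =>
        N * ((1 - τ) * (m * Lg + α * F) + (m * g + F) * m * N) / (α + (N * m - α) * τ)) τ
      = -(N ^ 2 * m ^ 2 * (Lg + (N * m - α) * g + N * F)) / (α + (N * m - α) * τ) ^ 2 := by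
    rw [haffine, (hasDerivAt_affine_div_affine _ _ _ _ τ hden.ne').deriv]
    ring
  have hnum : 0 < N ^ 2 * m ^ 2 * (Lg + (N * m - α) * g + N * F) := by positivity
  exact ⟨hderiv, hderiv ▸ div_neg_of_neg_of_pos (neg_neg_of_pos hnum) (pow_pos hden 2)⟩

/-- A tax increase decreases private employment. -/
theorem stmt_10 (α N m F g Lg : ℝ) (hα : 0 < α) (hN : 0 < N) (hm : 0 < m)
    (hF : 0 < F) (hg : 0 ≤ g) (hLg : 0 ≤ Lg) (hNm : N * m > α)
    (τ : ℝ) (hτ0 : 0 < τ) (hτ1 : τ < 1) :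
    deriv (fun τ : ℝ =>
        N * ((1 - τ) * (m * Lg + α * F) + (m * g + F) * m * N) / (α + (N * m - α) * τ)) τ
      = -(N ^ 2 * m ^ 2 * (Lg + (N * m - α) * g + N * F)) / (α + (N * m - α) * τ) ^ 2 ∧
    deriv (fun τ : ℝ =>
        N * ((1 - τ) * (m * Lg + α * F) + (m * g + F) * m * N) / (α + (N * m - α) * τ)) τ < 0 :=
  stmt_10_general α N m F g Lg hα hN hm hF hg hLg hNm τ hτ0
end

section
/- Define L(g) = N[(1−τ)(mL_g+αF) + (mg+F)mN]/(α+(Nm−α)τ) and q(g) = (1−τ)(L(g)+L_g−αg)/((Nm+α(1−τ))(L(g)+L_g)). Assume Nm > α, τ ∈ (0,1), F > 0, L_g ≥ 0. Then dq/dg < 0 for g ≥ 0: government purchase crowds out private consumption per capita. -/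
/-!
Both `L g + L_g` and `L g + L_g - α g` are affine in `g`, so `q` is a positive multiple of a
Möbius function `g ↦ (A + (B - α) g) / (A + B g)` with `A = L 0 + L_g > 0`. Its derivative is
`-α A / (A + B g)²`, which is negative.
-/

theorem hasDerivAt_div_affine (p q r s x : ℝ) (h : r + s * x ≠ 0) :
    HasDerivAt (fun x => (p + q * x) / (r + s * x)) ((q * r - p * s) / (r + s * x) ^ 2) x := by
  have hnum : HasDerivAt (fun x => p + q * x) q x := by
    simpa using ((hasDerivAt_id x).const_mul q).const_add p
  have hden : HasDerivAt (fun x => r + s * x) s x := by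
    simpa using ((hasDerivAt_id x).const_mul s).const_add r
  exact (hnum.div hden h).congr_deriv (by ring)

theorem deriv_const_mul_div_affine_neg {K A B c x : ℝ} (hK : 0 < K) (hA : 0 < A) (hc : 0 < c)
    (hx : A + B * x ≠ 0) :
    deriv (fun x => K * ((A + (B - c) * x) / (A + B * x))) x < 0 := by
  rw [((hasDerivAt_div_affine A (B - c) A B x hx).const_mul K).deriv]
  have hpos : 0 < K * (c * A / (A + B * x) ^ 2) := by positivity
  calc K * (((B - c) * A - A * B) / (A + B * x) ^ 2) = -(K * (c * A / (A + B * x) ^ 2)) := by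
        ring
    _ < 0 := neg_neg_of_pos hpos

/-- Government purchase crowds out private consumption per capita. -/
theorem stmt_12 (α N m F Lg τ : ℝ) (hα : 0 < α) (hN : 0 < N) (hm : 0 < m)
    (hF : 0 < F) (hLg : 0 ≤ Lg) (hτ0 : 0 < τ) (hτ1 : τ < 1) (hNm : N * m > α) :
    ∀ g : ℝ, 0 ≤ g →
      deriv (fun g : ℝ =>
        let L := N * ((1 - τ) * (m * Lg + α * F) + (m * g + F) * m * N) / (α + (N * m - α) * τ)
        (1 - τ) * (L + Lg - α * g) / ((N * m + α * (1 - τ)) * (L + Lg))) g < 0 := by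
  intro g hg
  have h1τ : 0 < 1 - τ := sub_pos.mpr hτ1
  set D := α + (N * m - α) * τ
  set C := N * m + α * (1 - τ)
  have hD : 0 < D := by nlinarith
  have hC : 0 < C := by positivity
  set A := N * ((1 - τ) * (m * Lg + α * F) + F * m * N) / D + Lg
  set B := N * m * m * N / D
  have hA : 0 < A := by positivity
  have hB : 0 < B := by positivity
  have hq : (fun g : ℝ =>
      let L := N * ((1 - τ) * (m * Lg + α * F) + (m * g + F) * m * N) / D
      (1 - τ) * (L + Lg - α * g) / (C * (L + Lg)))
      = fun g => (1 - τ) / C * ((A + (B - α) * g) / (A + B * g)) := by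
    funext x
    have hL : N * ((1 - τ) * (m * Lg + α * F) + (m * x + F) * m * N) / D + Lg = A + B * x := by
      simp only [A, B]
      ring
    dsimp only
    rw [hL, mul_div_mul_comm]
    ring
  rw [hq]
  exact deriv_const_mul_div_affine_neg (div_pos h1τ hC) hA hα (by positivity)
end

section
/- Define L(L_g) = N[(1−τ)(mL_g+αF) + (mg+F)mN]/(α+(Nm−α)τ) and q(L_g) = (1−τ)(L(L_g)+L_g−αg)/((Nm+α(1−τ))(L(L_g)+L_g)). Assume Nm > α, τ ∈ (0,1), F > 0, g ≥ 0, and L+L_g−αg > 0. Then ∂q/∂L_g ≥ 0, with equality if and only if g = 0: government employment weakly increases private consumption per capita. -/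
/-!
Writing `u = L + L_g`, which is affine in `L_g` with slope `k = ∂L/∂L_g + 1 > 0`, the consumption
share is `q = (1 - τ) (u - α g) / (c u) = (1 - τ)/c - (1 - τ) α g / (c u)` with
`c = N m + α (1 - τ) > 0`, so
`∂q/∂L_g = (1 - τ) α g k / (c u²)`: nonnegative, and zero exactly when `g = 0`.
-/

theorem HasDerivAt.mul_sub_div_mul {𝕜 : Type*} [NontriviallyNormedField 𝕜] {u : 𝕜 → 𝕜}
    {k x : 𝕜} (a b c : 𝕜) (hu : HasDerivAt u k x) (hx : u x ≠ 0) (hc : c ≠ 0) :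
    HasDerivAt (fun y => a * (u y - b) / (c * u y)) (a * b * k / (c * u x ^ 2)) x :=
  (((hu.sub_const b).const_mul a).div (hu.const_mul c) (mul_ne_zero hc hx)).congr_deriv
    (by field_simp; ring)

noncomputable def privateLabor (α N m F g τ Lg : ℝ) : ℝ :=
  N * ((1 - τ) * (m * Lg + α * F) + (m * g + F) * m * N) / (α + (N * m - α) * τ)

theorem hasDerivAt_privateLabor (α N m F g τ Lg : ℝ) :
    HasDerivAt (privateLabor α N m F g τ) (N * (1 - τ) * m / (α + (N * m - α) * τ)) Lg :=
  ((((((hasDerivAt_id' Lg).const_mul m).add_const (α * F)).const_mul (1 - τ)).add_const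
    ((m * g + F) * m * N)).const_mul N |>.div_const (α + (N * m - α) * τ)).congr_deriv (by ring)

theorem stmt_13_general (α N m F g τ : ℝ) (hα : 0 < α) (hN : 0 < N) (hm : 0 < m)
    (hg : 0 ≤ g) (hτ0 : 0 < τ) (hτ1 : τ < 1)
    (Lg : ℝ)
    (hαg : 0 < N * ((1 - τ) * (m * Lg + α * F) + (m * g + F) * m * N) / (α + (N * m - α) * τ)
      + Lg - α * g) :
    0 ≤ deriv (fun Lg : ℝ =>
        let L := N * ((1 - τ) * (m * Lg + α * F) + (m * g + F) * m * N) / (α + (N * m - α) * τ)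
        (1 - τ) * (L + Lg - α * g) / ((N * m + α * (1 - τ)) * (L + Lg))) Lg ∧
    (deriv (fun Lg : ℝ =>
        let L := N * ((1 - τ) * (m * Lg + α * F) + (m * g + F) * m * N) / (α + (N * m - α) * τ)
        (1 - τ) * (L + Lg - α * g) / ((N * m + α * (1 - τ)) * (L + Lg))) Lg = 0 ↔ g = 0) := by
  have hτ : 0 < 1 - τ := by linarith
  have hD : 0 < α + (N * m - α) * τ := by linarith [mul_pos hα hτ, mul_pos (mul_pos hN hm) hτ0]
  have hc : 0 < N * m + α * (1 - τ) := by positivity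
  have hk : 0 < N * (1 - τ) * m / (α + (N * m - α) * τ) + 1 := by positivity
  have hu : 0 < privateLabor α N m F g τ Lg + Lg := by
    unfold privateLabor; linarith [mul_nonneg hα.le hg]
  have hq := ((hasDerivAt_privateLabor α N m F g τ Lg).add (hasDerivAt_id' Lg)).mul_sub_div_mul
    (1 - τ) (α * g) (N * m + α * (1 - τ)) hu.ne' hc.ne'
  -- the function in `hq` is the goal's only up to unfolding `privateLabor`
  erw [hq.deriv]
  refine ⟨by positivity, ?_⟩
  simp [hτ.ne', hα.ne', hk.ne', hc.ne', hu.ne']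

/-- Government employment weakly increases private consumption per capita. -/
theorem stmt_13 (α N m F g τ : ℝ) (hα : 0 < α) (hN : 0 < N) (hm : 0 < m)
    (hF : 0 < F) (hg : 0 ≤ g) (hτ0 : 0 < τ) (hτ1 : τ < 1) (hNm : N * m > α)
    (Lg : ℝ) (hLg : 0 ≤ Lg)
    (hαg : 0 < N * ((1 - τ) * (m * Lg + α * F) + (m * g + F) * m * N) / (α + (N * m - α) * τ)
      + Lg - α * g) :
    0 ≤ deriv (fun Lg : ℝ =>
        let L := N * ((1 - τ) * (m * Lg + α * F) + (m * g + F) * m * N) / (α + (N * m - α) * τ)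
        (1 - τ) * (L + Lg - α * g) / ((N * m + α * (1 - τ)) * (L + Lg))) Lg ∧
    (deriv (fun Lg : ℝ =>
        let L := N * ((1 - τ) * (m * Lg + α * F) + (m * g + F) * m * N) / (α + (N * m - α) * τ)
        (1 - τ) * (L + Lg - α * g) / ((N * m + α * (1 - τ)) * (L + Lg))) Lg = 0 ↔ g = 0) :=
  stmt_13_general α N m F g τ hα hN hm hg hτ0 hτ1 Lg hαg
end

section
/- Define L(g) = N[(1−τ)(mL_g+αF) + (mg+F)mN]/(α+(Nm−α)τ) and p(g) = (L(g)+L_g)/(L(g)+L_g−αg) · [mw + α(1−τ)w/N]. Assume Nm > α, τ ∈ (0,1), F > 0, w > 0, L_g ≥ 0, and L(g)+L_g−αg > 0. Then dp/dg > 0: government purchase raises the equilibrium price. -/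
/-!
`L(g) + L_g` is affine in `g`, say `c + k g` with `c > 0`, so the price is the
linear-fractional function `K (c + k g) / (c + (k - α) g)` of `g`. Its derivative is
`K α c / (c + (k - α) g)²`, which is positive.
-/

theorem hasDerivAt_linear_fractional (a b c d x : ℝ) (hx : c * x + d ≠ 0) :
    HasDerivAt (fun x => (a * x + b) / (c * x + d)) ((a * d - b * c) / (c * x + d) ^ 2) x := by
  have hnum : HasDerivAt (fun x => a * x + b) a x := by
    simpa using ((hasDerivAt_id x).const_mul a).add_const b
  have hden : HasDerivAt (fun x => c * x + d) c x := by
    simpa using ((hasDerivAt_id x).const_mul c).add_const d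
  exact (hnum.div hden hx).congr_deriv (by ring)

theorem deriv_linear_fractional_mul_pos {k c α K x : ℝ} (hc : 0 < c) (hα : 0 < α) (hK : 0 < K)
    (hx : (k - α) * x + c ≠ 0) :
    0 < deriv (fun x => (k * x + c) / ((k - α) * x + c) * K) x := by
  rw [((hasDerivAt_linear_fractional k c (k - α) c x hx).mul_const K).deriv]
  rw [show k * c - c * (k - α) = α * c by ring]
  exact mul_pos (div_pos (mul_pos hα hc) (sq_pos_of_ne_zero hx)) hK

theorem stmt_14_general (α N m F w Lg τ : ℝ) (hα : 0 < α) (hN : 0 < N) (hm : 0 < m)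
    (hF : 0 < F) (hw : 0 < w) (hLg : 0 ≤ Lg) (hτ0 : 0 < τ) (hτ1 : τ < 1)
    (hNm : N * m > α) (g : ℝ)
    (hden : 0 < N * ((1 - τ) * (m * Lg + α * F) + (m * g + F) * m * N) / (α + (N * m - α) * τ)
      + Lg - α * g) :
    0 < deriv (fun g : ℝ =>
        let L := N * ((1 - τ) * (m * Lg + α * F) + (m * g + F) * m * N) / (α + (N * m - α) * τ)
        (L + Lg) / (L + Lg - α * g) * (m * w + α * ((1 - τ) * w) / N)) g := by
  set D := α + (N * m - α) * τ
  have hD : 0 < D := by have := mul_pos (sub_pos.2 hNm) hτ0; linarith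
  set c := N * ((1 - τ) * (m * Lg + α * F) + F * m * N) / D + Lg
  set k := N * (m * m * N) / D
  have hL : ∀ x, N * ((1 - τ) * (m * Lg + α * F) + (m * x + F) * m * N) / D + Lg = k * x + c :=
    fun x => by simp only [c, k]; ring
  have hτ : 0 < 1 - τ := by linarith
  have hc : 0 < c := by positivity
  have hK : 0 < m * w + α * ((1 - τ) * w) / N := by positivity
  have hfun : (fun g : ℝ =>
        let L := N * ((1 - τ) * (m * Lg + α * F) + (m * g + F) * m * N) / D
        (L + Lg) / (L + Lg - α * g) * (m * w + α * ((1 - τ) * w) / N))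
      = fun x => (k * x + c) / ((k - α) * x + c) * (m * w + α * ((1 - τ) * w) / N) := by
    funext x
    simp only [hL]
    ring_nf
  rw [hfun]
  refine deriv_linear_fractional_mul_pos hc hα hK ?_
  linarith [hL g]

/-- Government purchase raises the equilibrium price. -/
theorem stmt_14 (α N m F w Lg τ : ℝ) (hα : 0 < α) (hN : 0 < N) (hm : 0 < m)
    (hF : 0 < F) (hw : 0 < w) (hLg : 0 ≤ Lg) (hτ0 : 0 < τ) (hτ1 : τ < 1)
    (hNm : N * m > α) (g : ℝ) (hg : 0 ≤ g)
    (hden : 0 < N * ((1 - τ) * (m * Lg + α * F) + (m * g + F) * m * N) / (α + (N * m - α) * τ)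
      + Lg - α * g) :
    0 < deriv (fun g : ℝ =>
        let L := N * ((1 - τ) * (m * Lg + α * F) + (m * g + F) * m * N) / (α + (N * m - α) * τ)
        (L + Lg) / (L + Lg - α * g) * (m * w + α * ((1 - τ) * w) / N)) g :=
  stmt_14_general α N m F w Lg τ hα hN hm hF hw hLg hτ0 hτ1 hNm g hden
end

section
/- Define L(L_g) = N[(1−τ)(mL_g+αF) + (mg+F)mN]/(α+(Nm−α)τ) and p(L_g) = (L+L_g)/(L+L_g−αg) · [mw + α(1−τ)w/N]. Assume Nm > α, τ ∈ (0,1), F > 0, w > 0, g ≥ 0, and L+L_g−αg > 0. Then ∂p/∂L_g ≤ 0, with equality if and only if g = 0: government employment does not raise the price. -/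
/-- Government employment does not raise the price. -/
theorem stmt_15 (α N m F w g τ : ℝ) (hα : 0 < α) (hN : 0 < N) (hm : 0 < m)
    (hF : 0 < F) (hw : 0 < w) (hg : 0 ≤ g) (hτ0 : 0 < τ) (hτ1 : τ < 1)
    (hNm : N * m > α) (Lg : ℝ) (hLg : 0 ≤ Lg)
    (hden : 0 < N * ((1 - τ) * (m * Lg + α * F) + (m * g + F) * m * N) / (α + (N * m - α) * τ)
      + Lg - α * g) :
    deriv (fun Lg : ℝ =>
        let L := N * ((1 - τ) * (m * Lg + α * F) + (m * g + F) * m * N) / (α + (N * m - α) * τ)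
        (L + Lg) / (L + Lg - α * g) * (m * w + α * ((1 - τ) * w) / N)) Lg ≤ 0 ∧
    (deriv (fun Lg : ℝ =>
        let L := N * ((1 - τ) * (m * Lg + α * F) + (m * g + F) * m * N) / (α + (N * m - α) * τ)
        (L + Lg) / (L + Lg - α * g) * (m * w + α * ((1 - τ) * w) / N)) Lg = 0 ↔ g = 0) := by
  set D : ℝ := α + (N * m - α) * τ with hD
  have hD0 : 0 < D := by
    have h1 : 0 < (N * m - α) * τ := mul_pos (by linarith) hτ0
    rw [hD]; linarith
  set K : ℝ := m * w + α * ((1 - τ) * w) / N with hK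
  have hK0 : 0 < K := by
    have h1 : 0 < α * ((1 - τ) * w) / N :=
      div_pos (mul_pos hα (mul_pos (by linarith) hw)) hN
    have h2 : 0 < m * w := mul_pos hm hw
    rw [hK]; linarith
  set b : ℝ := N * (1 - τ) * m / D + 1 with hb
  have hb0 : 0 < b := by
    have h1 : 0 < N * (1 - τ) * m / D := div_pos (by nlinarith) hD0
    rw [hb]; linarith
  set u : ℝ → ℝ := fun x =>
    N * ((1 - τ) * (m * x + α * F) + (m * g + F) * m * N) / D + x with hu
  have hueq : u = fun x => b * x + N * ((1 - τ) * (α * F) + (m * g + F) * m * N) / D := by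
    funext x
    simp only [hu, hb]
    field_simp
    ring
  have hud : HasDerivAt u b Lg := by
    rw [hueq]
    simpa using ((hasDerivAt_id Lg).const_mul b).add_const
      (N * ((1 - τ) * (α * F) + (m * g + F) * m * N) / D)
  have hden' : u Lg - α * g ≠ 0 := by
    simp only [hu]
    intro h
    linarith [hden]
  have hden2 : 0 < u Lg - α * g := by
    simp only [hu]; linarith [hden]
  have hdiv : HasDerivAt (fun x => u x / (u x - α * g) * K)
      ((b * (u Lg - α * g) - u Lg * b) / (u Lg - α * g) ^ 2 * K) Lg :=
    (hud.div (hud.sub_const (α * g)) hden').mul_const K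
  have hfeq : (fun Lg : ℝ =>
        let L := N * ((1 - τ) * (m * Lg + α * F) + (m * g + F) * m * N) / (α + (N * m - α) * τ)
        (L + Lg) / (L + Lg - α * g) * (m * w + α * ((1 - τ) * w) / N))
      = fun x => u x / (u x - α * g) * K := by
    funext x
    simp only [hu, hK, hD]
  rw [hfeq, hdiv.deriv]
  have hval : (b * (u Lg - α * g) - u Lg * b) / (u Lg - α * g) ^ 2 * K
      = -(b * α * g * K) / (u Lg - α * g) ^ 2 := by ring
  rw [hval]
  constructor
  · apply div_nonpos_of_nonpos_of_nonneg
    · have : 0 ≤ b * α * g * K :=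
        mul_nonneg (mul_nonneg (mul_nonneg hb0.le hα.le) hg) hK0.le
      linarith
    · exact (pow_pos hden2 2).le
  · constructor
    · intro h
      have hsq : (0:ℝ) < (u Lg - α * g) ^ 2 := pow_pos hden2 2
      have h0 := (div_eq_zero_iff.mp h).resolve_right hsq.ne'
      have hbaK : 0 < b * α * K := mul_pos (mul_pos hb0 hα) hK0
      nlinarith
    · intro h
      rw [h]; ring_nf
end

section
/- Define, as functions of g: L = N[(1−τ)(mL_g+αF)+(mg+F)mN]/(α+(Nm−α)τ), q = (1−τ)(L+L_g−αg)/((Nm+α(1−τ))(L+L_g)), p = mw(L+L_g)/(L+L_g−α((L+L_g)q+g)), and Π = ((L+L_g)q+g)(p−mw) − Fw. Assume Nm > α, τ ∈ (0,1), F > 0, w > 0, L_g ≥ 0, g ≥ 0. Then ∂Π/∂g > 0: government purchase increases firm profit. (Key facts: ∂/∂g((L+L_g)q) = (1−τ)(Nm−α)/(α+(Nm−α)τ) > 0, p − mw > 0, and ∂p/∂g > 0.) -/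
/-!
With `K = N m + α (1 - τ)` and `u = L + Lg - α g`, output per firm is `(L + Lg) q + g = P / K` for
`P = (1 - τ) u + K g`, and the markup is `p - m w = w α P / (N K u)`, so profit equals
`w α P² / (N K u) - F w`. Labour is affine in `g`, with slope large enough that `u = A + B g` has
`A > 0` and `B = (N m - α) K / (α + (N m - α) τ) ≥ 0`; then `d/dg (P² / u)` factors as
`P ((1 - τ) B u + K (2 A + B g)) / u²`, a product of positive terms.
-/

open Filter Topology

theorem hasDerivAt_sq_div_affine (a K A B x : ℝ) (hu : A + B * x ≠ 0) :
    HasDerivAt (fun y => (a * (A + B * y) + K * y) ^ 2 / (A + B * y))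
      ((a * (A + B * x) + K * x) * (a * B * (A + B * x) + K * (2 * A + B * x)) / (A + B * x) ^ 2)
      x := by
  have hu' : HasDerivAt (fun y => A + B * y) B x := by
    simpa using ((hasDerivAt_id x).const_mul B).const_add A
  have hP : HasDerivAt (fun y => a * (A + B * y) + K * y) (a * B + K) x := by
    simpa using (hu'.const_mul a).fun_add ((hasDerivAt_id x).const_mul K)
  exact ((hP.fun_pow 2).fun_div hu' hu).congr_deriv (by push_cast; ring)

theorem output_mul_markup_eq (α N m w τ K S x : ℝ) (hN : N ≠ 0) (hm : m ≠ 0)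
    (hK : N * m + α * (1 - τ) = K) (hK0 : K ≠ 0) (hS : S ≠ 0) (hu : S - α * x ≠ 0) :
    (S * ((1 - τ) * (S - α * x) / (K * S)) + x) *
        (m * w * S / (S - α * (S * ((1 - τ) * (S - α * x) / (K * S)) + x)) - m * w)
      = w * α / (N * K) * (((1 - τ) * (S - α * x) + K * x) ^ 2 / (S - α * x)) := by
  have hY : S * ((1 - τ) * (S - α * x) / (K * S)) + x = ((1 - τ) * (S - α * x) + K * x) / K := by
    field_simp
  have hden : S - α * (((1 - τ) * (S - α * x) + K * x) / K) = N * m * (S - α * x) / K := by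
    rw [eq_div_iff hK0, sub_mul, mul_assoc, div_mul_cancel₀ _ hK0]
    linear_combination (-(S - α * x)) * hK
  rw [hY, hden]
  field_simp
  linear_combination (-(((1 - τ) * (S - α * x) + x * K) * w * (S - α * x))) * hK

theorem labour_add_sub_eq_affine (α N m F Lg τ D K x : ℝ) (hD : α + (N * m - α) * τ = D)
    (hD0 : D ≠ 0) (hK : N * m + α * (1 - τ) = K) :
    N * ((1 - τ) * (m * Lg + α * F) + (m * x + F) * m * N) / D + Lg - α * x
      = Lg + N * ((1 - τ) * (m * Lg + α * F) + F * m * N) / D + (N * m - α) * K / D * x := by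
  field_simp
  linear_combination α * x * hD + (N * m - α) * x * hK

/-- Government purchase increases firm profit. -/
theorem stmt_16 (α N m F w Lg τ : ℝ) (hα : 0 < α) (hN : 0 < N) (hm : 0 < m)
    (hF : 0 < F) (hw : 0 < w) (hLg : 0 ≤ Lg) (hτ0 : 0 < τ) (hτ1 : τ < 1)
    (hNm : N * m > α) (g : ℝ) (hg : 0 ≤ g) :
    0 < deriv (fun g : ℝ =>
        let L := N * ((1 - τ) * (m * Lg + α * F) + (m * g + F) * m * N) / (α + (N * m - α) * τ)
        let q := (1 - τ) * (L + Lg - α * g) / ((N * m + α * (1 - τ)) * (L + Lg))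
        let p := m * w * (L + Lg) / (L + Lg - α * ((L + Lg) * q + g))
        ((L + Lg) * q + g) * (p - m * w) - F * w) g := by
  have h1τ : 0 < 1 - τ := by linarith
  have hNmα : 0 < N * m - α := by linarith
  set D := α + (N * m - α) * τ with hD_def
  set K := N * m + α * (1 - τ) with hK_def
  have hD : 0 < D := by positivity
  have hK : 0 < K := by positivity
  set A := Lg + N * ((1 - τ) * (m * Lg + α * F) + F * m * N) / D
  set B := (N * m - α) * K / D
  have hA : 0 < A := by positivity
  have hB : 0 ≤ B := by positivity
  have hprofit : (fun g : ℝ =>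
        let L := N * ((1 - τ) * (m * Lg + α * F) + (m * g + F) * m * N) / D
        let q := (1 - τ) * (L + Lg - α * g) / (K * (L + Lg))
        let p := m * w * (L + Lg) / (L + Lg - α * ((L + Lg) * q + g))
        ((L + Lg) * q + g) * (p - m * w) - F * w)
      =ᶠ[𝓝 g] fun x =>
        w * α / (N * K) * (((1 - τ) * (A + B * x) + K * x) ^ 2 / (A + B * x)) - F * w := by
    have hu : ∀ᶠ x in 𝓝 g, 0 < A + B * x :=
      (by fun_prop : Continuous fun x => A + B * x).continuousAt.eventually
        (eventually_gt_nhds (by positivity))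
    have hS : ∀ᶠ x in 𝓝 g, 0 < A + B * x + α * x :=
      (by fun_prop : Continuous fun x => A + B * x + α * x).continuousAt.eventually
        (eventually_gt_nhds (by positivity))
    filter_upwards [hu, hS] with x hux hSx
    rw [← labour_add_sub_eq_affine α N m F Lg τ D K x hD_def.symm hD.ne' hK_def.symm] at hux hSx ⊢
    simp only [sub_add_cancel] at hSx
    exact congrArg (· - F * w)
      (output_mul_markup_eq α N m w τ K _ x hN.ne' hm.ne' hK_def.symm hK.ne' hSx.ne' hux.ne')
  rw [hprofit.deriv_eq, ((hasDerivAt_sq_div_affine (1 - τ) K A B g (by positivity)).const_mul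
    (w * α / (N * K)) |>.sub_const (F * w)).deriv]
  positivity
end

section
/- Define Λ := (1−Nmq)(Nm/(1−τ) + 2α)g − N(mg+F), where q = (1−τ)(L+L_g−αg)/((Nm+α(1−τ))(L+L_g)), L = N[(1−τ)(mL_g+αF)+(mg+F)mN]/(α+(Nm−α)τ), and Π(L_g) = ((L+L_g)q+g)(p−mw) − Fw with p = mw(L+L_g)/(L+L_g−α((L+L_g)q+g)). Assume Nm > α, τ ∈ (0,1), F > 0, w > 0, g > 0, L+L_g−αg > 0. Then the sign of ∂Π/∂L_g equals the sign of L_g − Λ: ∂Π/∂L_g < 0 if L_g < Λ, = 0 if L_g = Λ, and > 0 if L_g > Λ. -/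
/-!
Profit depends on `Lg` only through total employment `A = L + Lg`, which is affine in `Lg` with
slope `K / D`, where `K = N m + α (1 - τ)` and `D = α + (N m - α) τ` are positive. Substituting `q`,
profit becomes `α w / (N K) * ((1 - τ) A + g N m)² / (A - α g) - F w`, whose derivative in `A` is a
positive multiple of `(1 - τ) A - (2 α (1 - τ) + N m) g`. The identity
`D A = K (Lg + N (m g + F)) - α N m (1 - τ) g` turns `Lg - Λ` into a positive multiple of the same
factor, so `∂Π/∂Lg` and `Lg - Λ` have the same sign.
-/

noncomputable section Model

variable (α N m F w g τ : ℝ)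

def totalEmployment (x : ℝ) : ℝ :=
  N * ((1 - τ) * (m * x + α * F) + (m * g + F) * m * N) / (α + (N * m - α) * τ) + x

def profitOfEmployment (A : ℝ) : ℝ :=
  let q := (1 - τ) * (A - α * g) / ((N * m + α * (1 - τ)) * A)
  let p := m * w * A / (A - α * (A * q + g))
  (A * q + g) * (p - m * w) - F * w

variable {α N m g τ}

lemma profitOfEmployment_eq (hα : 0 < α) (hN : 0 < N) (hm : 0 < m) (hg : 0 < g)
    (hτ : τ < 1) {A : ℝ} (hA : α * g < A) :
    profitOfEmployment α N m F w g τ A =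
      α * w / (N * (N * m + α * (1 - τ))) *
        (((1 - τ) * A + g * (N * m)) ^ 2 / (A - α * g)) - F * w := by
  have hA₀ : 0 < A := lt_trans (by positivity) hA
  have hAg : A - α * g ≠ 0 := (sub_pos.2 hA).ne'
  simp only [profitOfEmployment]
  -- Abbreviating `K` (and `V` below) lets `field_simp` use their nonvanishing as atoms.
  set K := N * m + α * (1 - τ) with hK_def
  have hK : K ≠ 0 := by nlinarith
  have hsupply : A * ((1 - τ) * (A - α * g) / (K * A)) + g = ((1 - τ) * A + g * (N * m)) / K := by
    field_simp
    ring
  have hslack : A - α * (((1 - τ) * A + g * (N * m)) / K) = N * m * (A - α * g) / K := by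
    field_simp
    ring
  rw [hsupply, hslack]
  set V := A - α * g
  field_simp
  rw [hK_def]
  ring

lemma hasDerivAt_profitOfEmployment (hα : 0 < α) (hN : 0 < N) (hm : 0 < m) (hg : 0 < g)
    (hτ : τ < 1) {A : ℝ} (hA : α * g < A) :
    HasDerivAt (profitOfEmployment α N m F w g τ)
      (α * w * ((1 - τ) * A + g * (N * m)) /
          (N * (N * m + α * (1 - τ)) * (A - α * g) ^ 2) *
        ((1 - τ) * A - (2 * α * (1 - τ) + N * m) * g)) A := by
  have hlocal : (fun B => α * w / (N * (N * m + α * (1 - τ))) *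
        (((1 - τ) * B + g * (N * m)) ^ 2 / (B - α * g)) - F * w)
      =ᶠ[nhds A] profitOfEmployment α N m F w g τ := by
    filter_upwards [eventually_gt_nhds hA] with B hB
    exact (profitOfEmployment_eq F w hα hN hm hg hτ hB).symm
  have hAg : A - α * g ≠ 0 := (sub_pos.2 hA).ne'
  refine ((((((hasDerivAt_id' A).const_mul (1 - τ)).add_const (g * (N * m))).fun_pow 2).div
    ((hasDerivAt_id' A).sub_const (α * g)) hAg).const_mul _).sub_const _
    |>.congr_of_eventuallyEq hlocal.symm |>.congr_deriv ?_
  set K := N * m + α * (1 - τ)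
  have hK : K ≠ 0 := by nlinarith
  field_simp
  ring

lemma hasDerivAt_totalEmployment (hD : α + (N * m - α) * τ ≠ 0) (x : ℝ) :
    HasDerivAt (totalEmployment α N m F g τ)
      ((N * m + α * (1 - τ)) / (α + (N * m - α) * τ)) x := by
  refine ((((((hasDerivAt_id' x).const_mul m).add_const (α * F)).const_mul (1 - τ)).add_const
    ((m * g + F) * m * N)).const_mul N |>.div_const (α + (N * m - α) * τ)).add (hasDerivAt_id' x)
    |>.congr_deriv ?_
  set D := α + (N * m - α) * τ
  field_simp
  ring

lemma totalEmployment_mul (hD : α + (N * m - α) * τ ≠ 0) (x : ℝ) :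
    (α + (N * m - α) * τ) * totalEmployment α N m F g τ x =
      (N * m + α * (1 - τ)) * (x + N * (m * g + F)) - α * (N * m) * (1 - τ) * g := by
  unfold totalEmployment
  field_simp
  ring

lemma sub_threshold_eq (hτ : τ < 1) (hK : N * m + α * (1 - τ) ≠ 0) {x A : ℝ} (hA : A ≠ 0)
    (hA_mul : (α + (N * m - α) * τ) * A =
      (N * m + α * (1 - τ)) * (x + N * (m * g + F)) - α * (N * m) * (1 - τ) * g) :
    x - ((1 - N * m * ((1 - τ) * (A - α * g) / ((N * m + α * (1 - τ)) * A))) *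
        (N * m / (1 - τ) + 2 * α) * g - N * (m * g + F)) =
      ((α + (N * m - α) * τ) * A + α * (N * m) * (1 - τ) * g) /
          ((N * m + α * (1 - τ)) * A * (1 - τ)) *
        ((1 - τ) * A - (2 * α * (1 - τ) + N * m) * g) := by
  have hτ' : 1 - τ ≠ 0 := (sub_pos.2 hτ).ne'
  set K := N * m + α * (1 - τ)
  obtain rfl : x = ((α + (N * m - α) * τ) * A + α * (N * m) * (1 - τ) * g) / K -
      N * (m * g + F) := by
    field_simp
    linarith
  field_simp
  ring

end Model

lemma trichotomy_of_eq_pos_mul {d x y a b c : ℝ} (ha : 0 < a) (hb : 0 < b) (hd : d = a * c)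
    (hxy : x - y = b * c) : (x < y → d < 0) ∧ (x = y → d = 0) ∧ (x > y → d > 0) := by
  have h : SignType.sign d = SignType.sign (x - y) := by
    rw [hd, hxy, sign_mul, sign_mul, sign_pos ha, sign_pos hb]
  refine ⟨fun hlt => ?_, fun heq => ?_, fun hgt => ?_⟩
  · exact sign_eq_neg_one_iff.1 (h.trans (sign_eq_neg_one_iff.2 (sub_neg.2 hlt)))
  · exact sign_eq_zero_iff.1 (h.trans (sign_eq_zero_iff.2 (sub_eq_zero.2 heq)))
  · exact sign_eq_one_iff.1 (h.trans (sign_eq_one_iff.2 (sub_pos.2 hgt)))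

theorem stmt_18_general (α N m F w g τ : ℝ) (hα : 0 < α) (hN : 0 < N) (hm : 0 < m)
    (hw : 0 < w) (hg : 0 < g) (hτ0 : 0 < τ) (hτ1 : τ < 1)
    (hNm : N * m > α) (Lg : ℝ)
    (hden : 0 < N * ((1 - τ) * (m * Lg + α * F) + (m * g + F) * m * N) / (α + (N * m - α) * τ)
      + Lg - α * g) :
    let L := N * ((1 - τ) * (m * Lg + α * F) + (m * g + F) * m * N) / (α + (N * m - α) * τ)
    let q := (1 - τ) * (L + Lg - α * g) / ((N * m + α * (1 - τ)) * (L + Lg))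
    let Λ := (1 - N * m * q) * (N * m / (1 - τ) + 2 * α) * g - N * (m * g + F)
    let Pi := fun Lg : ℝ =>
      let L := N * ((1 - τ) * (m * Lg + α * F) + (m * g + F) * m * N) / (α + (N * m - α) * τ)
      let q := (1 - τ) * (L + Lg - α * g) / ((N * m + α * (1 - τ)) * (L + Lg))
      let p := m * w * (L + Lg) / (L + Lg - α * ((L + Lg) * q + g))
      ((L + Lg) * q + g) * (p - m * w) - F * w
    (Lg < Λ → deriv Pi Lg < 0) ∧ (Lg = Λ → deriv Pi Lg = 0) ∧ (Lg > Λ → deriv Pi Lg > 0) := by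
  intro L q Λ Pi
  have h1τ : 0 < 1 - τ := sub_pos.2 hτ1
  have hD : 0 < α + (N * m - α) * τ := by nlinarith
  have hK : 0 < N * m + α * (1 - τ) := by positivity
  have hA : α * g < totalEmployment α N m F g τ Lg := by rw [totalEmployment]; linarith
  have hA₀ : 0 < totalEmployment α N m F g τ Lg := lt_trans (by positivity) hA
  have hPi_eq : Pi = profitOfEmployment α N m F w g τ ∘ totalEmployment α N m F g τ := rfl
  have hPi := (hasDerivAt_profitOfEmployment F w hα hN hm hg hτ1 hA).comp Lg
    (hasDerivAt_totalEmployment (g := g) F hD.ne' Lg)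
  rw [hPi_eq]
  refine trichotomy_of_eq_pos_mul ?_ ?_ (hPi.deriv.trans (mul_right_comm _ _ _))
    (sub_threshold_eq F hτ1 hK.ne' hA₀.ne' (totalEmployment_mul F hD.ne' Lg))
  · have := sub_pos.2 hA
    positivity
  · positivity

/-- The sign of the response of profit to government employment is determined by the
threshold Λ. -/
theorem stmt_18 (α N m F w g τ : ℝ) (hα : 0 < α) (hN : 0 < N) (hm : 0 < m)
    (hF : 0 < F) (hw : 0 < w) (hg : 0 < g) (hτ0 : 0 < τ) (hτ1 : τ < 1)
    (hNm : N * m > α) (Lg : ℝ) (hLg : 0 ≤ Lg)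
    (hden : 0 < N * ((1 - τ) * (m * Lg + α * F) + (m * g + F) * m * N) / (α + (N * m - α) * τ)
      + Lg - α * g) :
    let L := N * ((1 - τ) * (m * Lg + α * F) + (m * g + F) * m * N) / (α + (N * m - α) * τ)
    let q := (1 - τ) * (L + Lg - α * g) / ((N * m + α * (1 - τ)) * (L + Lg))
    let Λ := (1 - N * m * q) * (N * m / (1 - τ) + 2 * α) * g - N * (m * g + F)
    let Pi := fun Lg : ℝ =>
      let L := N * ((1 - τ) * (m * Lg + α * F) + (m * g + F) * m * N) / (α + (N * m - α) * τ)
      let q := (1 - τ) * (L + Lg - α * g) / ((N * m + α * (1 - τ)) * (L + Lg))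
      let p := m * w * (L + Lg) / (L + Lg - α * ((L + Lg) * q + g))
      ((L + Lg) * q + g) * (p - m * w) - F * w
    (Lg < Λ → deriv Pi Lg < 0) ∧ (Lg = Λ → deriv Pi Lg = 0) ∧ (Lg > Λ → deriv Pi Lg > 0) :=
  stmt_18_general α N m F w g τ hα hN hm hw hg hτ0 hτ1 hNm Lg hden
end

section
/- With L, q, p, Π as closed-form functions of (g, L_g) given by L = N[(1−τ)(mL_g+αF)+(mg+F)mN]/(α+(Nm−α)τ), q = (1−τ)(L+L_g−αg)/((Nm+α(1−τ))(L+L_g)), p = mw(L+L_g)/(L+L_g−α((L+L_g)q+g)), Π = ((L+L_g)q+g)(p−mw) − Fw, assume Nm > α, τ ∈ (0,1), F > 0, w > 0, g ≥ 0, L_g ≥ 0, L+L_g−αg > 0. If additionally α > 1 − τ, then ∂Π/∂g > ∂Π/∂L_g: when the tax rate is high enough, government purchase is more favorable to firms than government employment. -/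
/-!
Write `D = α + (N m - α) τ` and `u = L_g + N F`. Then
`L + L_g = ((N m)² g + (N m + α (1 - τ)) u) / D`, the output `(L + L_g) q + g` is `Y / D` with
`Y = N m g + (1 - τ) u`, and the profit collapses to `Π = w α / (N D) · Y² / B - F w` with
`B = (N m - α) g + u`.

Differentiate `Y² / B = Y · (Y / B)` by the product rule, as in the paper. The first factor grows
faster in `g` (rate `N m`) than in `L_g` (rate `1 - τ < α < N m`), while the markup `Y / B`
has derivative `(N m - (N m - α)(1 - τ)) u / B² > 0` in `g` and
`-(N m - (N m - α)(1 - τ)) g / B² ≤ 0` in `L_g`.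
-/

open Filter Topology

noncomputable def firmProfit (α N m F w τ g Lg : ℝ) : ℝ :=
  let L := N * ((1 - τ) * (m * Lg + α * F) + (m * g + F) * m * N) / (α + (N * m - α) * τ)
  let q := (1 - τ) * (L + Lg - α * g) / ((N * m + α * (1 - τ)) * (L + Lg))
  let p := m * w * (L + Lg) / (L + Lg - α * ((L + Lg) * q + g))
  ((L + Lg) * q + g) * (p - m * w) - F * w

theorem profit_eq_of_employment {α N m F w τ S g : ℝ}
    (hK : N * m + α * (1 - τ) ≠ 0) (hNm : N * m ≠ 0) (hS : S ≠ 0) (hB : S - α * g ≠ 0) :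
    let q := (1 - τ) * (S - α * g) / ((N * m + α * (1 - τ)) * S)
    let p := m * w * S / (S - α * (S * q + g))
    (S * q + g) * (p - m * w) - F * w
      = w * α * ((1 - τ) * S + N * m * g) ^ 2 / (N * (N * m + α * (1 - τ)) * (S - α * g))
        - F * w := by
  generalize hKd : N * m + α * (1 - τ) = K at *
  intro q p
  have hN : N ≠ 0 := left_ne_zero_of_mul hNm
  have hm : m ≠ 0 := right_ne_zero_of_mul hNm
  have hY : S * q + g = ((1 - τ) * S + N * m * g) / K := by
    simp only [q]
    field_simp
    linear_combination (-g) * hKd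
  have hSY : S - α * (S * q + g) = N * m * (S - α * g) / K := by
    rw [hY]
    field_simp
    linear_combination (-S) * hKd
  have hmarkup : p - m * w = w * α * ((1 - τ) * S + N * m * g) / (N * (S - α * g)) := by
    simp only [p]
    rw [hSY]
    field_simp
    linear_combination (-S * w) * hKd
  rw [hmarkup, hY]
  field_simp

theorem firmProfit_eq {α N m F w τ g Lg : ℝ} (hD : α + (N * m - α) * τ ≠ 0)
    (hK : N * m + α * (1 - τ) ≠ 0) (hNm : N * m ≠ 0)
    (hS : (N * m) ^ 2 * g + (N * m + α * (1 - τ)) * (Lg + N * F) ≠ 0)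
    (hB : (N * m - α) * g + (Lg + N * F) ≠ 0) :
    firmProfit α N m F w τ g Lg =
      w * α / (N * (α + (N * m - α) * τ)) *
        ((N * m * g + (1 - τ) * (Lg + N * F)) ^ 2 / ((N * m - α) * g + (Lg + N * F)))
        - F * w := by
  have hL : N * ((1 - τ) * (m * Lg + α * F) + (m * g + F) * m * N)
      / (α + (N * m - α) * τ) + Lg
      = ((N * m) ^ 2 * g + (N * m + α * (1 - τ)) * (Lg + N * F)) / (α + (N * m - α) * τ) := by
    rw [div_add' _ _ _ hD]
    ring
  have hLB : N * ((1 - τ) * (m * Lg + α * F) + (m * g + F) * m * N)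
      / (α + (N * m - α) * τ) + Lg - α * g
      = (N * m + α * (1 - τ)) * ((N * m - α) * g + (Lg + N * F)) / (α + (N * m - α) * τ) := by
    rw [hL, div_sub' hD, div_left_inj' hD]
    ring
  have hLY : (1 - τ) * (N * ((1 - τ) * (m * Lg + α * F) + (m * g + F) * m * N)
      / (α + (N * m - α) * τ) + Lg) + N * m * g
      = (N * m + α * (1 - τ)) * (N * m * g + (1 - τ) * (Lg + N * F))
        / (α + (N * m - α) * τ) := by
    rw [hL, mul_div_assoc', div_add' _ _ _ hD, div_left_inj' hD]
    ring
  rw [firmProfit, profit_eq_of_employment hK hNm (by rw [hL]; exact div_ne_zero hS hD)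
    (by rw [hLB]; exact div_ne_zero (mul_ne_zero hK hB) hD), hLB, hLY]
  field_simp

theorem firmProfit_eventuallyEq {α N m F w τ g Lg : ℝ} (hD : α + (N * m - α) * τ ≠ 0)
    (hK : N * m + α * (1 - τ) ≠ 0) (hNm : N * m ≠ 0)
    (hS : (N * m) ^ 2 * g + (N * m + α * (1 - τ)) * (Lg + N * F) ≠ 0)
    (hB : (N * m - α) * g + (Lg + N * F) ≠ 0) :
    (fun z : ℝ × ℝ => firmProfit α N m F w τ z.1 z.2) =ᶠ[𝓝 (g, Lg)] fun z =>
      w * α / (N * (α + (N * m - α) * τ)) *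
        ((N * m * z.1 + (1 - τ) * (z.2 + N * F)) ^ 2 / ((N * m - α) * z.1 + (z.2 + N * F)))
        - F * w := by
  have hS' := (by fun_prop : Continuous fun z : ℝ × ℝ =>
    (N * m) ^ 2 * z.1 + (N * m + α * (1 - τ)) * (z.2 + N * F)).continuousAt
      (x := (g, Lg)) |>.eventually_ne hS
  have hB' := (by fun_prop : Continuous fun z : ℝ × ℝ =>
    (N * m - α) * z.1 + (z.2 + N * F)).continuousAt (x := (g, Lg)) |>.eventually_ne hB
  filter_upwards [hS', hB'] with z hzS hzB using firmProfit_eq hD hK hNm hzS hzB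

theorem HasDerivAt.sq_div {Y B : ℝ → ℝ} {y b x : ℝ} (hY : HasDerivAt Y y x)
    (hB : HasDerivAt B b x) (hB0 : B x ≠ 0) :
    HasDerivAt (fun t => Y t ^ 2 / B t)
      (y * (Y x / B x) + Y x * ((y * B x - Y x * b) / B x ^ 2)) x := by
  have hsq : (fun t => Y t ^ 2 / B t) = fun t => Y t * (Y t / B t) := funext fun t => by ring
  exact hsq ▸ hY.mul (hY.div hB hB0)

theorem sq_div_affine_deriv_lt {a b e g u : ℝ} (hb : 0 < b) (hba : b < a) (hbe : b * e < a)
    (he : 0 ≤ e) (hg : 0 ≤ g) (hu : 0 < u) :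
    let Y := a * g + b * u
    let B := e * g + u
    b * (Y / B) + Y * ((b * B - Y * 1) / B ^ 2) < a * (Y / B) + Y * ((a * B - Y * e) / B ^ 2) := by
  intro Y B
  have hY : 0 < Y := by have := hb.trans hba; positivity
  have hB : 0 < B := by positivity
  have hmarkup_g : 0 < (a * B - Y * e) / B ^ 2 := by
    have hnum : a * B - Y * e = (a - b * e) * u := by ring
    rw [hnum]
    exact div_pos (mul_pos (by linarith) hu) (by positivity)
  have hmarkup_u : (b * B - Y * 1) / B ^ 2 ≤ 0 := by
    have hnum : b * B - Y * 1 = -((a - b * e) * g) := by ring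
    rw [hnum]
    exact div_nonpos_of_nonpos_of_nonneg (neg_nonpos.2 (mul_nonneg (by linarith) hg))
      (by positivity)
  have houtput : b * (Y / B) < a * (Y / B) := mul_lt_mul_of_pos_right hba (div_pos hY hB)
  nlinarith [mul_pos hY hmarkup_g, mul_nonpos_of_nonneg_of_nonpos hY.le hmarkup_u]

theorem stmt_19_general (α N m F w τ : ℝ) (hα : 0 < α) (hN : 0 < N) (hm : 0 < m)
    (hF : 0 < F) (hw : 0 < w) (hτ0 : 0 < τ) (hτ1 : τ < 1) (hNm : N * m > α)
    (g Lg : ℝ) (hg : 0 ≤ g) (hLg : 0 ≤ Lg)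
    (hατ : α > 1 - τ) :
    let Pi := fun g Lg : ℝ =>
      let L := N * ((1 - τ) * (m * Lg + α * F) + (m * g + F) * m * N) / (α + (N * m - α) * τ)
      let q := (1 - τ) * (L + Lg - α * g) / ((N * m + α * (1 - τ)) * (L + Lg))
      let p := m * w * (L + Lg) / (L + Lg - α * ((L + Lg) * q + g))
      ((L + Lg) * q + g) * (p - m * w) - F * w
    deriv (fun g => Pi g Lg) g > deriv (fun Lg => Pi g Lg) Lg := by
  intro Pi
  have h1τ : 0 < 1 - τ := by linarith
  have hK : 0 < N * m + α * (1 - τ) := by positivity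
  have hD : 0 < α + (N * m - α) * τ := by nlinarith
  have he : 0 < N * m - α := by linarith
  have hu : 0 < Lg + N * F := by positivity
  have hB : 0 < (N * m - α) * g + (Lg + N * F) := by positivity
  have hPi : (fun z : ℝ × ℝ => Pi z.1 z.2) =ᶠ[𝓝 (g, Lg)] _ :=
    firmProfit_eventuallyEq hD.ne' hK.ne' (by positivity) (by positivity) hB.ne'
  have hPi_g := hPi.comp_tendsto (Continuous.tendsto (f := fun t : ℝ => (t, Lg)) (by fun_prop) g)
  have hPi_Lg := hPi.comp_tendsto (Continuous.tendsto (f := fun t : ℝ => (g, t)) (by fun_prop) Lg)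
  simp only [Function.comp_def] at hPi_g hPi_Lg
  have hY_g : HasDerivAt (fun t => N * m * t + (1 - τ) * (Lg + N * F)) (N * m) g :=
    (hasDerivAt_const_mul (N * m)).add_const _
  have hB_g : HasDerivAt (fun t => (N * m - α) * t + (Lg + N * F)) (N * m - α) g :=
    (hasDerivAt_const_mul (N * m - α)).add_const _
  have hY_Lg : HasDerivAt (fun t => N * m * g + (1 - τ) * (t + N * F)) (1 - τ) Lg := by
    simpa using (((hasDerivAt_id Lg).add_const (N * F)).const_mul (1 - τ)).const_add (N * m * g)
  have hB_Lg : HasDerivAt (fun t => (N * m - α) * g + (t + N * F)) 1 Lg := by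
    simpa using ((hasDerivAt_id Lg).add_const (N * F)).const_add ((N * m - α) * g)
  have hd_g := (((hY_g.sq_div hB_g hB.ne').const_mul
    (w * α / (N * (α + (N * m - α) * τ)))).sub_const (F * w)).congr_of_eventuallyEq hPi_g
  have hd_Lg := (((hY_Lg.sq_div hB_Lg hB.ne').const_mul
    (w * α / (N * (α + (N * m - α) * τ)))).sub_const (F * w)).congr_of_eventuallyEq hPi_Lg
  rw [hd_g.deriv, hd_Lg.deriv]
  exact mul_lt_mul_of_pos_left
    (sq_div_affine_deriv_lt h1τ (by linarith) (by nlinarith) he.le hg hu) (by positivity)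

/-- With a sufficiently high tax rate, government purchase is more favorable to firms
than government employment. -/
theorem stmt_19 (α N m F w τ : ℝ) (hα : 0 < α) (hN : 0 < N) (hm : 0 < m)
    (hF : 0 < F) (hw : 0 < w) (hτ0 : 0 < τ) (hτ1 : τ < 1) (hNm : N * m > α)
    (g Lg : ℝ) (hg : 0 ≤ g) (hLg : 0 ≤ Lg)
    (hden : 0 < N * ((1 - τ) * (m * Lg + α * F) + (m * g + F) * m * N) / (α + (N * m - α) * τ)
      + Lg - α * g)
    (hατ : α > 1 - τ) :
    let Pi := fun g Lg : ℝ =>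
      let L := N * ((1 - τ) * (m * Lg + α * F) + (m * g + F) * m * N) / (α + (N * m - α) * τ)
      let q := (1 - τ) * (L + Lg - α * g) / ((N * m + α * (1 - τ)) * (L + Lg))
      let p := m * w * (L + Lg) / (L + Lg - α * ((L + Lg) * q + g))
      ((L + Lg) * q + g) * (p - m * w) - F * w
    deriv (fun g => Pi g Lg) g > deriv (fun Lg => Pi g Lg) Lg :=
  stmt_19_general α N m F w τ hα hN hm hF hw hτ0 hτ1 hNm g Lg hg hLg hατ
end
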